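/- Let U be an up-down graph filtration and suppose two consecutive additions in its ascending part, of edges e1 (negative, step j-1) and e2 (positive, step j), are switched. If z is a 1-cycle in G_{j+1} containing e2 that serves as a representative for the edge-edge pair of e2, then e1 ∈ z if and only if e1 lies on some cycle in G_{j+1}. -/

import Mathlib

open SimpleGraph Finset

structure FGraph (V : Type) where
  verts : Finset V
  edges : Finset (Sym2 V)

inductive Step (V : Type) where
  | vertex (v : V)
  | edge (e : Sym2 V)
deriving DecidableEq

variable {V : Type} [DecidableEq V] {m : ℕ}

def FGraph.sg (G : FGraph V) : SimpleGraph V :=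
  SimpleGraph.fromEdgeSet (G.edges : Set (Sym2 V))

/-- `x` and `y` lie in the same connected component of `G`. -/
def FGraph.ConnectedIn (G : FGraph V) (x y : V) : Prop :=
  x ∈ G.verts ∧ y ∈ G.verts ∧ G.sg.Reachable x y

/-- The number of connected components of `G`. -/
noncomputable def FGraph.numComponents (G : FGraph V) : ℕ :=
  Nat.card (Quot fun x y : {v // v ∈ G.verts} => G.sg.Adj x.1 y.1)

/-- First Betti number as an integer: `|E| + #components - |V|`. -/
noncomputable def FGraph.betti1 (G : FGraph V) : ℤ :=
  (G.edges.card : ℤ) + (G.numComponents : ℤ) - (G.verts.card : ℤ)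

/-- The edge `e` lies on some cycle of `G`. -/
def FGraph.OnCycle (G : FGraph V) (e : Sym2 V) : Prop :=
  ∃ (x : V) (c : G.sg.Walk x x), c.IsCycle ∧ e ∈ c.edges

def FGraph.addStep (G : FGraph V) : Step V → FGraph V
  | .vertex v => ⟨insert v G.verts, G.edges⟩
  | .edge e => ⟨G.verts, insert e G.edges⟩

def StepValid (G : FGraph V) : Step V → Prop
  | .vertex v => v ∉ G.verts
  | .edge e => e ∉ G.edges ∧ ¬ e.IsDiag ∧ ∀ v ∈ e, v ∈ G.verts

/-- A simplex-wise standard graph filtration of length `m`. -/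
structure Filtration (V : Type) (m : ℕ) where
  steps : Fin m → Step V

namespace Filtration

def graphAt (F : Filtration V m) : ℕ → FGraph V
  | 0 => ⟨∅, ∅⟩
  | i + 1 => if h : i < m then (F.graphAt i).addStep (F.steps ⟨i, h⟩) else F.graphAt i

def Valid (F : Filtration V m) : Prop :=
  ∀ i : Fin m, StepValid (F.graphAt (i : ℕ)) (F.steps i)

/-- The addition index of vertex `x`. -/
noncomputable def vidx (F : Filtration V m) (x : V) : ℕ :=
  sInf {n : ℕ | ∃ i : Fin m, (i : ℕ) = n ∧ F.steps i = Step.vertex x}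

/-- The addition index of edge `e`. -/
noncomputable def eidx (F : Filtration V m) (e : Sym2 V) : ℕ :=
  sInf {n : ℕ | ∃ i : Fin m, (i : ℕ) = n ∧ F.steps i = Step.edge e}

/-- Step `i` adds a negative edge: one merging two connected components. -/
def NegativeAt (F : Filtration V m) (i : Fin m) : Prop :=
  ∃ e, F.steps i = Step.edge e ∧
    (F.graphAt ((i : ℕ) + 1)).numComponents < (F.graphAt (i : ℕ)).numComponents

/-- Step `i` adds a positive edge: one not changing the number of components. -/
def PositiveAt (F : Filtration V m) (i : Fin m) : Prop :=
  ∃ e, F.steps i = Step.edge e ∧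
    (F.graphAt ((i : ℕ) + 1)).numComponents = (F.graphAt (i : ℕ)).numComponents

/-- `x` is the oldest vertex of its connected component in `G_i`. -/
def OldestIn (F : Filtration V m) (i : ℕ) (x : V) : Prop :=
  x ∈ (F.graphAt i).verts ∧
    ∀ y, (F.graphAt i).ConnectedIn x y → F.vidx x ≤ F.vidx y

/-- `x` is the vertex paired with the negative edge added at step `j`:
`x` is the younger of the two oldest vertices of the merged components. -/
def PairedAt (F : Filtration V m) (j : Fin m) (x : V) : Prop :=
  ∃ u v, F.steps j = Step.edge s(u, v) ∧
    ¬ (F.graphAt (j : ℕ)).ConnectedIn u v ∧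
    (F.graphAt (j : ℕ)).ConnectedIn x u ∧ F.OldestIn (j : ℕ) x ∧
    ∃ y, (F.graphAt (j : ℕ)).ConnectedIn y v ∧ F.OldestIn (j : ℕ) y ∧
      F.vidx y < F.vidx x

/-- `x` is unpaired at stage `i`: not paired with any negative edge added before `i`. -/
def UnpairedAt (F : Filtration V m) (i : ℕ) (x : V) : Prop :=
  ∀ j : Fin m, (j : ℕ) < i → ¬ F.PairedAt j x

/-- Step `i` contributes a node of the merge forest (a vertex leaf or a
negative edge internal node). -/
def IsNode (F : Filtration V m) (i : Fin m) : Prop :=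
  (∃ v, F.steps i = Step.vertex v) ∨ F.NegativeAt i

/-- `x` is a representative vertex of the merge-forest node at level `i`. -/
def RepOf (F : Filtration V m) (i : Fin m) (x : V) : Prop :=
  F.steps i = Step.vertex x ∨
    ∃ u v, F.steps i = Step.edge s(u, v) ∧
      ¬ (F.graphAt (i : ℕ)).ConnectedIn u v ∧ (x = u ∨ x = v)

/-- The merge-forest node at level `j` is a child of the (negative-edge)
node at level `i`: `j`'s component at time `i` is one of the two components
merged by the edge at step `i`, and no node of level strictly between `j`
and `i` lies in that component. -/
def MFChild (F : Filtration V m) (j i : Fin m) : Prop :=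
  (j : ℕ) < (i : ℕ) ∧ F.IsNode j ∧
  ∃ u v, F.steps i = Step.edge s(u, v) ∧
    ¬ (F.graphAt (i : ℕ)).ConnectedIn u v ∧
    ∃ x, F.RepOf j x ∧
      ((F.graphAt (i : ℕ)).ConnectedIn x u ∨ (F.graphAt (i : ℕ)).ConnectedIn x v) ∧
      ∀ j' : Fin m, (j : ℕ) < (j' : ℕ) → (j' : ℕ) < (i : ℕ) → F.IsNode j' →
        ∀ y, F.RepOf j' y → ¬ (F.graphAt (i : ℕ)).ConnectedIn x y

end Filtration

/-- A nonempty edge set in which every (non-diagonal) degree is even: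
an element of the cycle space. -/
def EvenCycleSet {V : Type} [DecidableEq V] (C : Finset (Sym2 V)) : Prop :=
  C.Nonempty ∧ ∀ v : V, Even ((C.filter fun e => v ∈ e ∧ ¬ e.IsDiag).card)


/-- degree of `v` in edge finset `C` (non-diagonal edges only). -/
private def edeg (C : Finset (Sym2 V)) (v : V) : ℕ :=
  (C.filter fun e => v ∈ e ∧ ¬ e.IsDiag).card

private lemma edeg_erase (C : Finset (Sym2 V)) {e : Sym2 V} (heC : e ∈ C)
    (hd : ¬ e.IsDiag) (v : V) :
    edeg C v = edeg (C.erase e) v + (if v ∈ e then 1 else 0) := by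
  unfold edeg
  rw [Finset.filter_erase]
  by_cases hv : v ∈ e
  · rw [Finset.card_erase_of_mem (by simp [heC, hv, hd]), if_pos hv]
    have : 0 < (C.filter fun e => v ∈ e ∧ ¬ e.IsDiag).card :=
      Finset.card_pos.2 ⟨e, by simp [heC, hv, hd]⟩
    omega
  · rw [Finset.erase_eq_of_notMem (by simp [hv]), if_neg hv]
    omega

private lemma parity_reach : ∀ (C : Finset (Sym2 V)) (v : V), Odd (edeg C v) →
    ∃ w, w ≠ v ∧ Odd (edeg C w) ∧
      (SimpleGraph.fromEdgeSet (C : Set (Sym2 V))).Reachable v w := by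
  intro C
  induction C using Finset.strongInduction with
  | _ C ih =>
    intro v hv
    obtain ⟨e, heC, hev, hed⟩ : ∃ e ∈ C, v ∈ e ∧ ¬ e.IsDiag := by
      by_contra h
      push_neg at h
      have : edeg C v = 0 := by
        unfold edeg
        rw [Finset.card_eq_zero, Finset.filter_eq_empty_iff]
        intro e he
        simp only [not_and, not_not]
        exact h e he
      simp [this] at hv
    set u := Sym2.Mem.other' hev with hu
    have he : s(v, u) = e := Sym2.other_spec' hev
    have hvu : v ≠ u := by
      intro h
      apply hed
      rw [← he, h]
      exact Sym2.mk_isDiag_iff.2 rfl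
    have hue : u ∈ e := by rw [← he]; simp
    have hadj : (SimpleGraph.fromEdgeSet (C : Set (Sym2 V))).Adj v u := by
      rw [SimpleGraph.fromEdgeSet_adj]
      exact ⟨by rw [he]; exact_mod_cast heC, hvu⟩
    have hdv := edeg_erase C heC hed v
    have hdu := edeg_erase C heC hed u
    rw [if_pos hev] at hdv
    rw [if_pos hue] at hdu
    by_cases hOu : Odd (edeg C u)
    · exact ⟨u, fun h => hvu h.symm, hOu, hadj.reachable⟩
    · have hOu' : Odd (edeg (C.erase e) u) := by
        rw [Nat.not_odd_iff_even] at hOu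
        rw [hdu] at hOu
        rcases Nat.even_add_one.1 hOu with h
        exact Nat.not_even_iff_odd.1 h
      obtain ⟨w, hwu, hww, hreach⟩ := ih (C.erase e) (Finset.erase_ssubset heC) u hOu'
      have hwv : w ≠ v := by
        intro hq
        rw [hq] at hww
        have : Even (edeg (C.erase e) v) := by
          have h3 := hv
          rw [hdv] at h3
          rcases Nat.odd_add_one.1 h3 with h
          exact Nat.not_odd_iff_even.1 h
        exact (Nat.not_odd_iff_even.2 this) hww
      have hwe : w ∉ e := by
        rw [← he, Sym2.mem_iff]
        rintro (rfl | rfl)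
        · exact hwv rfl
        · exact hwu rfl
      refine ⟨w, hwv, ?_, ?_⟩
      · rw [edeg_erase C heC hed w, if_neg hwe]
        simpa using hww
      · exact hadj.reachable.trans
          (hreach.mono (fromEdgeSet_mono (by exact_mod_cast Finset.erase_subset e C)))

private lemma even_erase_reach (z : Finset (Sym2 V)) (hz : ∀ v : V,
      Even ((z.filter fun e => v ∈ e ∧ ¬ e.IsDiag).card))
    {a b : V} (hab : a ≠ b) (hez : s(a, b) ∈ z) :
    (SimpleGraph.fromEdgeSet ((z.erase s(a, b)) : Set (Sym2 V))).Reachable a b := by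
  have hd : ¬ (s(a, b) : Sym2 V).IsDiag := by simp [hab]
  have hda := edeg_erase z hez hd a
  rw [if_pos (by simp)] at hda
  have hOa : Odd (edeg (z.erase s(a, b)) a) := by
    have := hz a
    rw [show (z.filter fun e => a ∈ e ∧ ¬ e.IsDiag).card = edeg z a from rfl, hda] at this
    rcases Nat.even_add_one.1 this with h
    exact Nat.not_even_iff_odd.1 h
  obtain ⟨w, hwa, hww, hreach⟩ := parity_reach (z.erase s(a, b)) a hOa
  have hwb : w = b := by
    by_contra hwb
    have hwe : w ∉ (s(a, b) : Sym2 V) := by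
      rw [Sym2.mem_iff]; rintro (rfl | rfl); exacts [hwa rfl, hwb rfl]
    have := edeg_erase z hez hd w
    rw [if_neg hwe] at this
    have heven : Even (edeg (z.erase s(a, b)) w) := by
      have h2 := hz w
      rw [show (z.filter fun e => w ∈ e ∧ ¬ e.IsDiag).card = edeg z w from rfl, this] at h2
      simpa using h2
    exact (Nat.not_odd_iff_even.2 heven) hww
  exact hwb ▸ hreach

private lemma reach_of_insert (S : Set (Sym2 V)) {u v x y : V}
    (huv : (SimpleGraph.fromEdgeSet S).Reachable u v)
    (h : (SimpleGraph.fromEdgeSet (insert s(u, v) S)).Reachable x y) :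
    (SimpleGraph.fromEdgeSet S).Reachable x y := by
  obtain ⟨w⟩ := h
  induction w with
  | nil => exact Reachable.refl _
  | @cons x' c' y' hadj p ih =>
    rw [SimpleGraph.fromEdgeSet_adj, Set.mem_insert_iff] at hadj
    obtain ⟨hmem | hmem, hne⟩ := hadj
    · have : (x' = u ∧ c' = v) ∨ (x' = v ∧ c' = u) := Sym2.eq_iff.1 hmem
      rcases this with ⟨rfl, rfl⟩ | ⟨rfl, rfl⟩
      · exact huv.trans ih
      · exact huv.symm.trans ih
    · exact (SimpleGraph.Adj.reachable (by rw [SimpleGraph.fromEdgeSet_adj]; exact ⟨hmem, hne⟩)).trans ih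

private lemma valid_edge_verts (F : Filtration V m) (hF : F.Valid) :
    ∀ i : ℕ, ∀ e ∈ (F.graphAt i).edges, ∀ x ∈ e, x ∈ (F.graphAt i).verts := by
  intro i
  induction i with
  | zero => simp [Filtration.graphAt]
  | succ i ih =>
    intro e he x hx
    by_cases h : i < m
    · have hstep := hF ⟨i, h⟩
      rcases hs : F.steps ⟨i, h⟩ with v | e'
      · rw [Filtration.graphAt] at he ⊢
        rw [dif_pos h, hs] at he ⊢
        exact Finset.mem_insert_of_mem (ih e he x hx)
      · rw [Filtration.graphAt] at he ⊢
        rw [dif_pos h, hs] at he ⊢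
        rcases Finset.mem_insert.1 he with rfl | he'
        · rw [hs] at hstep
          exact hstep.2.2 x hx
        · exact ih e he' x hx
    · rw [Filtration.graphAt, dif_neg h] at he ⊢
      exact ih e he x hx

private lemma quot_mk_eq_of_reachable (G : FGraph V)
    (hvalid : ∀ e ∈ G.edges, ∀ x ∈ e, x ∈ G.verts) :
    ∀ {x y : V} (_ : G.sg.Walk x y) (hx : x ∈ G.verts) (hy : y ∈ G.verts),
      Quot.mk (fun a b : {v // v ∈ G.verts} => G.sg.Adj a.1 b.1) ⟨x, hx⟩ =
      Quot.mk (fun a b : {v // v ∈ G.verts} => G.sg.Adj a.1 b.1) ⟨y, hy⟩ := by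
  intro x y w
  induction w with
  | nil => intro hx hy; rfl
  | @cons x' c' y' hadj p ih =>
    intro hx hy
    have hc : c' ∈ G.verts := by
      have hmem : s(x', c') ∈ G.sg.edgeSet := hadj
      rw [FGraph.sg, SimpleGraph.edgeSet_fromEdgeSet] at hmem
      exact hvalid _ hmem.1 c' (by simp)
    exact (Quot.sound (r := fun a b : {v // v ∈ G.verts} => G.sg.Adj a.1 b.1) (a := ⟨x', hx⟩) (b := ⟨c', hc⟩) hadj).trans (ih hc hy)

private lemma numComponents_insert_eq (G : FGraph V) {a b : V}
    (hreach : G.sg.Reachable a b)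
    (hvalid : ∀ e ∈ G.edges, ∀ x ∈ e, x ∈ G.verts) :
    (FGraph.mk G.verts (insert s(a, b) G.edges)).numComponents = G.numComponents := by
  unfold FGraph.numComponents
  apply Nat.card_congr
  set G' : FGraph V := FGraph.mk G.verts (insert s(a, b) G.edges) with hG'
  have hverts : G'.verts = G.verts := rfl
  set r : {v // v ∈ G.verts} → {v // v ∈ G.verts} → Prop :=
    fun x y => G.sg.Adj x.1 y.1 with hr
  set r' : {v // v ∈ G.verts} → {v // v ∈ G.verts} → Prop :=
    fun x y => G'.sg.Adj x.1 y.1 with hr'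
  have key : ∀ x y : {v // v ∈ G.verts}, r' x y → Quot.mk r x = Quot.mk r y := by
    rintro ⟨x, hx⟩ ⟨y, hy⟩ hxy
    have hxy2 : G'.sg.Adj x y := hxy
    have hxy' : s(x, y) ∈ (insert s(a, b) G.edges : Finset (Sym2 V)) ∧ x ≠ y := by
      rw [FGraph.sg, SimpleGraph.fromEdgeSet_adj] at hxy2
      exact_mod_cast hxy2
    rcases Finset.mem_insert.1 hxy'.1 with heq | hmem
    · rcases Sym2.eq_iff.1 heq with ⟨rfl, rfl⟩ | ⟨rfl, rfl⟩
      · obtain ⟨w⟩ := hreach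
        exact quot_mk_eq_of_reachable G hvalid w hx hy
      · obtain ⟨w⟩ := hreach
        exact (quot_mk_eq_of_reachable G hvalid w hy hx).symm
    · refine Quot.sound ?_
      show G.sg.Adj x y
      rw [FGraph.sg, SimpleGraph.fromEdgeSet_adj]
      exact ⟨by exact_mod_cast hmem, hxy'.2⟩
  exact {
    toFun := Quot.lift (Quot.mk r) key
    invFun := Quot.map id (fun x y h => by
      have h' : G.sg.Adj x.1 y.1 := h
      rw [FGraph.sg, SimpleGraph.fromEdgeSet_adj] at h'
      show G'.sg.Adj x.1 y.1
      rw [FGraph.sg, SimpleGraph.fromEdgeSet_adj]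
      exact ⟨by exact_mod_cast Finset.mem_insert_of_mem (by exact_mod_cast h'.1), h'.2⟩)
    left_inv := by rintro ⟨x⟩; rfl
    right_inv := by rintro ⟨x⟩; rfl }

/-- for a negative edge `e1` (step `i1`) immediately followed by
a positive edge `e2` (step `i2 = i1+1`) in (the ascending part of) a
filtration, and a representative 1-cycle `z ⊆ G_{i2+1}` containing `e2`:
`e1 ∈ z` iff `e1` lies on some cycle of `G_{i2+1}`. -/
theorem stmt_18 {V : Type} [DecidableEq V] {m : ℕ} (F : Filtration V m)
    (hF : F.Valid) (i1 i2 : Fin m) (h12 : (i2 : ℕ) = (i1 : ℕ) + 1)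
    (e1 e2 : Sym2 V) (h1 : F.steps i1 = Step.edge e1)
    (h2 : F.steps i2 = Step.edge e2)
    (hn : F.NegativeAt i1) (hp : F.PositiveAt i2)
    (z : Finset (Sym2 V)) (hzsub : z ⊆ (F.graphAt ((i2 : ℕ) + 1)).edges)
    (hze2 : e2 ∈ z) (hz : EvenCycleSet z) :
    e1 ∈ z ↔ (F.graphAt ((i2 : ℕ) + 1)).OnCycle e1 := by
  classical
  obtain ⟨a, b, rfl⟩ : ∃ a b, e1 = s(a, b) := by
    induction e1 using Sym2.ind with | _ x y => exact ⟨x, y, rfl⟩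
  obtain ⟨u, v, rfl⟩ : ∃ u v, e2 = s(u, v) := by
    induction e2 using Sym2.ind with | _ x y => exact ⟨x, y, rfl⟩
  have hm1 : (i1 : ℕ) < m := i1.isLt
  have hm2 : (i2 : ℕ) < m := i2.isLt
  set G0 := F.graphAt (i1 : ℕ) with hG0
  have hG2 : F.graphAt ((i1 : ℕ) + 1) =
      FGraph.mk G0.verts (insert s(a, b) G0.edges) := by
    rw [Filtration.graphAt, dif_pos hm1]
    have : F.steps ⟨(i1 : ℕ), hm1⟩ = Step.edge s(a, b) := by
      rw [show (⟨(i1 : ℕ), hm1⟩ : Fin m) = i1 from Fin.ext rfl, h1]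
    rw [this]
    rfl
  have hG3 : F.graphAt ((i2 : ℕ) + 1) =
      FGraph.mk G0.verts (insert s(u, v) (insert s(a, b) G0.edges)) := by
    rw [Filtration.graphAt, dif_pos hm2]
    have hs2 : F.steps ⟨(i2 : ℕ), hm2⟩ = Step.edge s(u, v) := by
      rw [show (⟨(i2 : ℕ), hm2⟩ : Fin m) = i2 from Fin.ext rfl, h2]
    rw [hs2, show F.graphAt (i2 : ℕ) = F.graphAt ((i1 : ℕ) + 1) by rw [h12], hG2]
    rfl
  have hv1 : StepValid G0 (Step.edge s(a, b)) := h1 ▸ hF i1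
  obtain ⟨h1nm, h1nd, h1vt⟩ := hv1
  have hv2 : StepValid (F.graphAt (i2 : ℕ)) (Step.edge s(u, v)) := h2 ▸ hF i2
  have hv2' : s(u, v) ∉ (insert s(a, b) G0.edges : Finset (Sym2 V)) ∧
      ¬ (s(u, v) : Sym2 V).IsDiag := by
    obtain ⟨hA, hB, _⟩ := hv2
    refine ⟨?_, hB⟩
    rw [show F.graphAt (i2 : ℕ) = F.graphAt ((i1 : ℕ) + 1) by rw [h12], hG2] at hA
    exact hA
  have hab : a ≠ b := fun h => h1nd (by rw [h]; exact Sym2.mk_isDiag_iff.2 rfl)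
  have huv : u ≠ v := fun h => hv2'.2 (by rw [h]; exact Sym2.mk_isDiag_iff.2 rfl)
  have hne21 : s(u, v) ≠ s(a, b) := fun h =>
    hv2'.1 (h ▸ Finset.mem_insert_self _ _)
  -- the ambient graph
  have hHedges : (F.graphAt ((i2 : ℕ) + 1)).edges =
      insert s(u, v) (insert s(a, b) G0.edges) := by rw [hG3]
  have hHeq : (F.graphAt ((i2 : ℕ) + 1)).sg = SimpleGraph.fromEdgeSet
      ((insert s(u, v) (insert s(a, b) G0.edges) : Finset (Sym2 V)) : Set (Sym2 V)) := by
    rw [FGraph.sg, hHedges]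
  show s(a, b) ∈ z ↔ (F.graphAt ((i2 : ℕ) + 1)).OnCycle s(a, b)
  rw [FGraph.OnCycle, ← adj_and_reachable_delete_edges_iff_exists_cycle]
  constructor
  · intro hmem
    have hzH : z ⊆ (F.graphAt ((i2 : ℕ) + 1)).edges := hzsub
    have hadj : (F.graphAt ((i2 : ℕ) + 1)).sg.Adj a b := by
      rw [FGraph.sg, SimpleGraph.fromEdgeSet_adj]
      exact ⟨by exact_mod_cast hzH hmem, hab⟩
    refine ⟨hadj, ?_⟩
    have hr0 := even_erase_reach z hz.2 hab hmem
    refine hr0.mono ?_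
    intro x y hxy
    rw [SimpleGraph.fromEdgeSet_adj] at hxy
    obtain ⟨hxy1, hxy2⟩ := hxy
    have hxy1' : s(x, y) ∈ z.erase s(a, b) := by exact_mod_cast hxy1
    rw [SimpleGraph.deleteEdges, SimpleGraph.sdiff_adj]
    constructor
    · rw [FGraph.sg, SimpleGraph.fromEdgeSet_adj]
      exact ⟨by exact_mod_cast hzH (Finset.mem_of_mem_erase hxy1'), hxy2⟩
    · rw [SimpleGraph.fromEdgeSet_adj]
      rintro ⟨hsing, -⟩
      exact Finset.ne_of_mem_erase hxy1' (Set.mem_singleton_iff.1 hsing)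
  · rintro ⟨hadj, hreach⟩
    by_contra hmem
    -- z \ {e2} lies in G0
    have hzE : z.erase s(u, v) ⊆ G0.edges := by
      intro f hf
      have hf1 : f ∈ z := Finset.mem_of_mem_erase hf
      have hf2 : f ≠ s(u, v) := Finset.ne_of_mem_erase hf
      have := hzsub hf1
      rw [hHedges] at this
      rcases Finset.mem_insert.1 this with rfl | this
      · exact absurd rfl hf2
      rcases Finset.mem_insert.1 this with rfl | this
      · exact absurd hf1 hmem
      · exact this
    have hruv : (SimpleGraph.fromEdgeSet (G0.edges : Set (Sym2 V))).Reachable u v :=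
      (even_erase_reach z hz.2 huv hze2).mono
        (SimpleGraph.fromEdgeSet_mono (by exact_mod_cast hzE))
    have hle : (F.graphAt ((i2 : ℕ) + 1)).sg \ SimpleGraph.fromEdgeSet {s(a, b)} ≤
        SimpleGraph.fromEdgeSet (insert s(u, v) (G0.edges : Set (Sym2 V))) := by
      intro x y hxy
      rw [SimpleGraph.sdiff_adj, hHeq, SimpleGraph.fromEdgeSet_adj,
        SimpleGraph.fromEdgeSet_adj] at hxy
      obtain ⟨⟨hxy1, hxy2⟩, hxy3⟩ := hxy
      rw [SimpleGraph.fromEdgeSet_adj]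
      refine ⟨?_, hxy2⟩
      have hne : s(x, y) ≠ s(a, b) := fun h => hxy3 ⟨Set.mem_singleton_iff.2 h, hxy2⟩
      have hxy1' : s(x, y) ∈ (insert s(u, v) (insert s(a, b) G0.edges) : Finset (Sym2 V)) := by
        exact_mod_cast hxy1
      rcases Finset.mem_insert.1 hxy1' with h' | hmem'
      · rw [h']; exact Set.mem_insert _ _
      rcases Finset.mem_insert.1 hmem' with h' | hmem''
      · exact absurd h' hne
      · exact Set.mem_insert_of_mem _ hmem''
    have hr2 : (SimpleGraph.fromEdgeSet
        (insert s(u, v) (G0.edges : Set (Sym2 V)))).Reachable a b := hreach.mono hle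
    have hr3 : (SimpleGraph.fromEdgeSet (G0.edges : Set (Sym2 V))).Reachable a b :=
      reach_of_insert _ hruv hr2
    obtain ⟨e', he', hlt⟩ := hn
    rw [hG2] at hlt
    have heq := numComponents_insert_eq G0 hr3 (valid_edge_verts F hF (i1 : ℕ))
    rw [heq] at hlt
    exact lt_irrefl _ hlt
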